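/- arXiv:1309.4184 — 4 statements merged into one kernel-verified Lean document; each statement's English description precedes it below -/
import Mathlib

section
/- Let (g_{n,k}) be a doubly-indexed family of nonnegative reals with g_{n,k} = 0 for |k| > n, g_{n,k} = g_{n,-k}, and g_{n,k}^2 ≤ g_{2n,0} for all n,k. Let g_n = ∑_k g_{n,k}. Then limsup_n g_n^{1/n} = limsup_n g_{n,0}^{1/n}. -/
/-!
Since `g n k ≤ √(g (2n) 0)` on the `2n + 1` points of the support,
`g n 0 ≤ g_n ≤ (2n + 1) √(g (2n) 0)`. Taking `n`-th roots,
`g n 0 ^ (1/n) ≤ g_n ^ (1/n) ≤ (2n + 1) ^ (1/n) · g (2n) 0 ^ (1/(2n))`, and the factor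
`(2n + 1) ^ (1/n)` tends to `1`, so both sequences have the same limsup.
-/

open Filter Topology

theorem limsup_eq_of_le_mul_comp {ι : Type*} {l : Filter ι} [l.NeBot] {u v c : ι → ℝ}
    {φ : ι → ι} (hφ : Tendsto φ l l) (hc : Tendsto c l (𝓝 1)) (hv : ∀ i, 0 ≤ v i)
    (hvu : ∀ᶠ i in l, v i ≤ u i) (huv : ∀ᶠ i in l, u i ≤ c i * v (φ i)) :
    limsup u l = limsup v l := by
  have eventually_lt {b b' : ℝ} (hb : ∀ᶠ i in l, v i ≤ b) (hbb' : b < b') :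
      ∀ᶠ i in l, u i < b' := by
    filter_upwards [huv, hφ.eventually hb, hc.eventually (lt_mem_nhds zero_lt_one),
      (hc.mul_const b).eventually (gt_mem_nhds (by simpa using hbb'))] with i hu hvb hc0 hcb
    calc u i ≤ c i * v (φ i) := hu
      _ ≤ c i * b := mul_le_mul_of_nonneg_left hvb hc0.le
      _ < b' := hcb
  by_cases hbdd : IsBoundedUnder (· ≤ ·) l v
  · obtain ⟨b, hb⟩ := hbdd
    have hu_bdd : IsBoundedUnder (· ≤ ·) l u :=
      ⟨b + 1, (eventually_lt hb (lt_add_one b)).mono fun _ => le_of_lt⟩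
    have hv_cobdd : IsCoboundedUnder (· ≤ ·) l v := isCoboundedUnder_le_of_le l hv
    have hu_cobdd : IsCoboundedUnder (· ≤ ·) l u :=
      isCoboundedUnder_le_of_eventually_le l (hvu.mono fun i h => (hv i).trans h)
    refine le_antisymm ((limsup_le_iff hu_cobdd hu_bdd).2 fun y hy => ?_)
      (limsup_le_limsup hvu hv_cobdd hu_bdd)
    obtain ⟨z, hvz, hzy⟩ := exists_between hy
    exact eventually_lt ((eventually_lt_of_limsup_lt hvz ⟨b, hb⟩).mono fun _ => le_of_lt) hzy
  · -- both limsups are the junk value `0` of an unbounded real sequence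
    have hu_unbdd : ¬ IsBoundedUnder (· ≤ ·) l u := fun h => hbdd (h.mono_le hvu)
    rw [Real.limsup_of_not_isBoundedUnder hbdd, Real.limsup_of_not_isBoundedUnder hu_unbdd]

theorem tendsto_two_mul_add_one_rpow_one_div :
    Tendsto (fun n : ℕ => (2 * (n : ℝ) + 1) ^ (1 / (n : ℝ))) atTop (𝓝 1) := by
  have h : Tendsto (fun n : ℕ => 2 * (n : ℝ) + 1) atTop atTop :=
    tendsto_atTop_add_const_right _ _ (tendsto_natCast_atTop_atTop.const_mul_atTop two_pos)
  refine ((tendsto_rpow_div_mul_add 2 1 (-1) one_ne_zero.symm).comp h).congr fun n => ?_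
  simp only [Function.comp_apply, one_mul, add_neg_cancel_right]
  rw [div_mul_cancel_left₀ two_ne_zero, one_div]

theorem finsum_eq_sum_Icc {f : ℤ → ℝ} {n : ℕ} (hf : ∀ k, (n : ℤ) < |k| → f k = 0) :
    ∑ᶠ k, f k = ∑ k ∈ Finset.Icc (-(n : ℤ)) n, f k := by
  refine finsum_eq_sum_of_support_subset f fun k hk => ?_
  simpa [← abs_le] using not_lt.1 (mt (hf k) hk)

theorem finsum_le_two_mul_add_one_mul {f : ℤ → ℝ} {n : ℕ} {M : ℝ}
    (hf : ∀ k, (n : ℤ) < |k| → f k = 0) (hM : ∀ k, f k ≤ M) :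
    ∑ᶠ k, f k ≤ (2 * n + 1) * M := by
  rw [finsum_eq_sum_Icc hf]
  refine (Finset.sum_le_card_nsmul _ _ _ fun k _ => hM k).trans_eq ?_
  rw [Int.card_Icc, nsmul_eq_mul, show (n + 1 - -(n : ℤ)).toNat = 2 * n + 1 by omega]
  push_cast
  rfl

theorem limsup_sum_eq_limsup_zero_general (g : ℕ → ℤ → ℝ)
    (hpos : ∀ n k, 0 ≤ g n k)
    (hsupp : ∀ (n : ℕ) (k : ℤ), (n : ℤ) < |k| → g n k = 0)
    (hsq : ∀ (n : ℕ) (k : ℤ), (g n k) ^ 2 ≤ g (2 * n) 0) :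
    limsup (fun n : ℕ => (∑ᶠ k : ℤ, g n k) ^ (1 / (n : ℝ))) atTop
      = limsup (fun n : ℕ => (g n 0) ^ (1 / (n : ℝ))) atTop := by
  have hsum_nonneg (n : ℕ) : 0 ≤ ∑ᶠ k, g n k := finsum_nonneg (hpos n)
  have hzero_le_sum (n : ℕ) : g n 0 ≤ ∑ᶠ k, g n k := by
    rw [finsum_eq_sum_Icc (hsupp n)]
    exact Finset.single_le_sum (fun k _ => hpos n k) (by simp)
  have hsum_le (n : ℕ) : ∑ᶠ k, g n k ≤ (2 * n + 1) * √(g (2 * n) 0) :=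
    finsum_le_two_mul_add_one_mul (hsupp n) fun k =>
      (le_abs_self _).trans (Real.abs_le_sqrt (hsq n k))
  refine limsup_eq_of_le_mul_comp (φ := (2 * ·)) (tendsto_id.const_mul_atTop' two_pos)
    tendsto_two_mul_add_one_rpow_one_div (fun n => Real.rpow_nonneg (hpos n 0) _)
    (.of_forall fun n => Real.rpow_le_rpow (hpos n 0) (hzero_le_sum n) (by positivity))
    (.of_forall fun n => ?_)
  calc (∑ᶠ k, g n k) ^ (1 / (n : ℝ))
      ≤ ((2 * n + 1) * √(g (2 * n) 0)) ^ (1 / (n : ℝ)) :=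
        Real.rpow_le_rpow (hsum_nonneg n) (hsum_le n) (by positivity)
    _ = (2 * n + 1) ^ (1 / (n : ℝ)) * g (2 * n) 0 ^ (1 / ((2 * n : ℕ) : ℝ)) := by
        rw [Real.mul_rpow (by positivity) (Real.sqrt_nonneg _), Real.sqrt_eq_rpow,
          ← Real.rpow_mul (hpos _ 0), one_div_mul_one_div]
        push_cast
        rfl

/-- "Most popular" argument: if `g_{n,k} ≥ 0` vanishes for `|k| > n`, is symmetric in `k`,
and satisfies `g_{n,k}² ≤ g_{2n,0}`, then with `g_n = ∑_k g_{n,k}` we have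
`limsup g_n^{1/n} = limsup g_{n,0}^{1/n}`. -/
theorem limsup_sum_eq_limsup_zero (g : ℕ → ℤ → ℝ)
    (hpos : ∀ n k, 0 ≤ g n k)
    (hsupp : ∀ (n : ℕ) (k : ℤ), (n : ℤ) < |k| → g n k = 0)
    (hsymm : ∀ (n : ℕ) (k : ℤ), g n k = g n (-k))
    (hsq : ∀ (n : ℕ) (k : ℤ), (g n k) ^ 2 ≤ g (2 * n) 0) :
    limsup (fun n : ℕ => (∑ᶠ k : ℤ, g n k) ^ (1 / (n : ℝ))) atTop
      = limsup (fun n : ℕ => (g n 0) ^ (1 / (n : ℝ))) atTop :=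
  limsup_sum_eq_limsup_zero_general g hpos hsupp hsq
end

section
/- In BS(N,N) = ⟨a,b | a^N b = b a^N⟩ with N ≥ 2, the subgroup generated by x = ab and y = ab^{-1} is a free group of rank 2. -/
/-- Letters: `(0, true) = a`, `(0, false) = a⁻¹`, `(1, true) = b`, `(1, false) = b⁻¹`. -/
abbrev Letter := Fin 2 × Bool

/-- The single relator `a^N b a^{-M} b^{-1}` of the Baumslag–Solitar group. -/
def BSrel (N M : ℕ) : Set (FreeGroup (Fin 2)) :=
  {FreeGroup.of 0 ^ N * FreeGroup.of 1 * (FreeGroup.of 0 ^ M)⁻¹ * (FreeGroup.of 1)⁻¹}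

/-- The Baumslag–Solitar group `BS(N,M) = ⟨a, b ∣ aᴺ b = b aᴹ⟩`. -/
abbrev BS (N M : ℕ) := PresentedGroup (BSrel N M)

/-- The generator `a` of `BS(N,M)`. -/
def bsA (N M : ℕ) : BS N M := PresentedGroup.of 0

/-- The generator `b` of `BS(N,M)`. -/
def bsB (N M : ℕ) : BS N M := PresentedGroup.of 1

/-- Evaluate a word over `{a^{±1}, b^{±1}}` in `BS(N,M)`. -/
def evalWord (N M : ℕ) (w : List Letter) : BS N M :=
  (w.map fun s => if s.2 then PresentedGroup.of s.1 else (PresentedGroup.of s.1)⁻¹).prod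

/-- `g_{n,k}`: the number of words of length `n` equal to `aᵏ` in `BS(N,M)`. -/
noncomputable def gCount (N M : ℕ) (n : ℕ) (k : ℤ) : ℕ :=
  Nat.card {w : List Letter // w.length = n ∧ evalWord N M w = bsA N M ^ k}


/-!
Sending `a` to a generator of `ℤ/N` and `b` to a generator of `ℤ` respects the relation, since
`aᴺ` goes to `1`; this maps `BS(N,N)` to the free product `ℤ/N ∗ ℤ`, where the image of `a` is
nontrivial because `N ≥ 2`. There `x = ab` and `y = ab⁻¹` play ping-pong on reduced words:
`x` sends every word not starting with a negative power of `b` to a word starting `g bᵏ` with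
`g ≠ 1` and `k > 0`, while `x⁻¹` sends every word not of that shape to one starting with a
negative power of `b`; for `y` the signs are exchanged. So `x` and `y` are free in `ℤ/N ∗ ℤ`,
and a fortiori in `BS(N,N)`.
-/

namespace Monoid.CoprodI.Word

variable {ι : Type*} {M : ι → Type*} [DecidableEq ι]

section Monoid

variable [∀ i, Monoid (M i)] [∀ i, DecidableEq (M i)] {i j : ι}

theorem equivPair_head_smul_same (m : M i) (w : Word M) :
    (equivPair i (of m • w)).head = m * (equivPair i w).head := by
  rw [equivPair_smul_same]

theorem equivPair_tail_smul_same (m : M i) (w : Word M) :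
    (equivPair i (of m • w)).tail = (equivPair i w).tail := by
  rw [equivPair_smul_same]

theorem equivPair_tail_eq_self_of_head_eq_one {w : Word M} (h : (equivPair i w).head = 1) :
    (equivPair i w).tail = w := by
  simpa [h] using equivPair_head_smul_equivPair_tail (i := i) w

theorem of_smul_eq_equivPair_tail {m : M i} {w : Word M} (h : m * (equivPair i w).head = 1) :
    of m • w = (equivPair i w).tail := by
  rw [of_smul_def, rcons, dif_pos h]

theorem equivPair_head_eq_one_of_ne (hij : i ≠ j) {w : Word M} (h : (equivPair i w).head ≠ 1) :
    (equivPair j w).head = 1 := by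
  rw [equivPair_head] at h ⊢
  split_ifs at h with hi
  · rw [dif_neg fun hj => hij (hi.2.symm.trans hj.2)]
  · exact absurd rfl h

theorem equivPair_head_empty : (equivPair i (empty : Word M)).head = 1 := by
  rw [equivPair_eq_of_fstIdx_ne (by simp [fstIdx])]

end Monoid

section PingPong

variable [∀ i, Group (M i)] [∀ i, DecidableEq (M i)] {i j : ι}

def headSet (j : ι) (S : Set (M j)) : Set (Word M) :=
  {w | (equivPair j w).head ∈ S}

@[simp] theorem mem_headSet {S : Set (M j)} {w : Word M} :
    w ∈ headSet j S ↔ (equivPair j w).head ∈ S :=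
  Iff.rfl

def headTailSet (i j : ι) (S : Set (M j)) : Set (Word M) :=
  {w | (equivPair i w).head ≠ 1 ∧ (equivPair i w).tail ∈ headSet j S}

theorem disjoint_headSet {S T : Set (M j)} (h : Disjoint S T) :
    Disjoint (headSet j S) (headSet j T) :=
  h.preimage _

theorem disjoint_headTailSet {S T : Set (M j)} (h : Disjoint S T) :
    Disjoint (headTailSet i j S) (headTailSet i j T) :=
  Set.disjoint_left.2 fun _ hS hT => Set.disjoint_left.1 (disjoint_headSet h) hS.2 hT.2

theorem disjoint_headTailSet_headSet (hij : i ≠ j) {S T : Set (M j)} (hT : 1 ∉ T) :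
    Disjoint (headTailSet i j S) (headSet j T) :=
  Set.disjoint_left.2 fun _ hS hT' => hT (equivPair_head_eq_one_of_ne hij hS.1 ▸ hT')

theorem of_mul_of_smul_mem_headTailSet (hij : i ≠ j) {a : M i} (ha : a ≠ 1) {c : M j}
    {S T : Set (M j)} (hS : 1 ∉ S) (hc : ∀ h ∉ T, c * h ∈ S) {w : Word M}
    (hw : w ∉ headSet j T) : (of a * of c) • w ∈ headTailSet i j S := by
  have hj : (equivPair j (of c • w)).head ∈ S := by
    rw [equivPair_head_smul_same]
    exact hc _ hw
  have hi : (equivPair i (of c • w)).head = 1 :=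
    equivPair_head_eq_one_of_ne hij.symm fun h => hS (h ▸ hj)
  rw [mul_smul]
  refine ⟨?_, ?_⟩
  · rwa [equivPair_head_smul_same, hi, mul_one]
  · rwa [equivPair_tail_smul_same, equivPair_tail_eq_self_of_head_eq_one hi]

theorem inv_of_mul_of_smul_mem_headSet (hij : i ≠ j) {a : M i} (ha : a ≠ 1) {c : M j}
    {S T : Set (M j)} (hS : 1 ∉ S) (hc : ∀ h ∉ S, c⁻¹ * h ∈ T) {w : Word M}
    (hw : w ∉ headTailSet i j S) : (of a * of c)⁻¹ • w ∈ headSet j T := by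
  rw [mul_inv_rev, mul_smul, ← map_inv, ← map_inv]
  suffices (equivPair j (of a⁻¹ • w)).head ∉ S by
    rw [mem_headSet, equivPair_head_smul_same]
    exact hc _ this
  by_cases h : a⁻¹ * (equivPair i w).head = 1
  · have hhead : (equivPair i w).head ≠ 1 := inv_mul_eq_one.1 h ▸ ha
    rw [of_smul_eq_equivPair_tail h]
    exact fun hmem => hw ⟨hhead, hmem⟩
  · rw [equivPair_head_eq_one_of_ne hij (by rwa [equivPair_head_smul_same])]
    exact hS

end PingPong

end Monoid.CoprodI.Word

theorem Disjoint.pairwise_fin_two {α : Type*} [PartialOrder α] [OrderBot α] {s t : α}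
    (h : Disjoint s t) : Pairwise (Function.onFun Disjoint ![s, t]) := by
  intro k l hkl
  fin_cases k <;> fin_cases l <;> simp_all [Function.onFun, h.symm]

namespace Monoid.CoprodI

open Word
open scoped Pointwise

-- `FreeGroup.injective_lift_of_ping_pong` needs the group in the universe of the index type.
variable {ι : Type} {M : ι → Type} [∀ i, Group (M i)] {i j : ι}

theorem injective_freeGroup_lift_of_mul_of [LinearOrder (M j)] [MulLeftMono (M j)]
    (hij : i ≠ j) {a : M i} (ha : a ≠ 1) {b : M j} (hb : 1 < b) :
    Function.Injective (FreeGroup.lift ![of a * of b, of a * of b⁻¹]) := by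
  classical
  have hup : ∀ h ∉ Set.Iio (1 : M j), b * h ∈ Set.Ioi 1 := fun h hh =>
    one_lt_mul_of_lt_of_le' hb (not_lt.1 hh)
  have hdown : ∀ h ∉ Set.Ioi (1 : M j), b⁻¹ * h ∈ Set.Iio 1 := fun h hh =>
    mul_lt_one_of_lt_of_le (Left.inv_lt_one_iff.2 hb) (not_lt.1 hh)
  let X := ![headTailSet i j (Set.Ioi (1 : M j)), headTailSet i j (Set.Iio 1)]
  let Y := ![headSet j (Set.Iio (1 : M j)), headSet j (Set.Ioi 1)]
  have hX : ∀ k, ![of a * of b, of a * of b⁻¹] k • (Y k)ᶜ ⊆ X k := by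
    rintro k _ ⟨w, hw, rfl⟩
    fin_cases k
    · exact of_mul_of_smul_mem_headTailSet hij ha Set.self_notMem_Ioi hup hw
    · exact of_mul_of_smul_mem_headTailSet hij ha Set.self_notMem_Iio hdown hw
  refine FreeGroup.injective_lift_of_ping_pong _ X Y (fun k => ?_)
    (disjoint_headTailSet Set.Ioi_disjoint_Iio_same).pairwise_fin_two
    (disjoint_headSet Set.Iio_disjoint_Ioi_same).pairwise_fin_two
    (fun k l => ?_) hX (fun k => ?_)
  · exact ⟨_, hX k ⟨empty, by fin_cases k <;> simp [Y, equivPair_head_empty], rfl⟩⟩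
  · fin_cases k <;> fin_cases l <;> exact disjoint_headTailSet_headSet hij (by simp)
  · rintro _ ⟨w, hw, rfl⟩
    fin_cases k
    · exact inv_of_mul_of_smul_mem_headSet hij ha Set.self_notMem_Ioi hdown hw
    · exact inv_of_mul_of_smul_mem_headSet hij ha Set.self_notMem_Iio (by simpa using hup) hw

end Monoid.CoprodI

namespace BS

variable {G : Type*} [Group G] {N M : ℕ}

def lift (x y : G) (h : x ^ N * y = y * x ^ M) : BS N M →* G :=
  PresentedGroup.toGroup (f := ![x, y]) <| by
    rintro _ rfl
    simp [h]

@[simp] theorem lift_bsA (x y : G) (h : x ^ N * y = y * x ^ M) : lift x y h (bsA N M) = x :=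
  PresentedGroup.toGroup.of _

@[simp] theorem lift_bsB (x y : G) (h : x ^ N * y = y * x ^ M) : lift x y h (bsB N M) = y :=
  PresentedGroup.toGroup.of _

end BS

abbrev ZModIntFactor (N : ℕ) : Bool → Type
  | true => Multiplicative (ZMod N)
  | false => Multiplicative ℤ

instance (N : ℕ) : ∀ i, Group (ZModIntFactor N i)
  | true => inferInstanceAs (Group (Multiplicative (ZMod N)))
  | false => inferInstanceAs (Group (Multiplicative ℤ))

open Monoid.CoprodI in
def BS.toZModCoprodInt (N : ℕ) : BS N N →* Monoid.CoprodI (ZModIntFactor N) :=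
  BS.lift (of (i := true) (.ofAdd 1)) (of (i := false) (.ofAdd 1)) <| by
    rw [← map_pow, ← ofAdd_nsmul, nsmul_one, ZMod.natCast_self, ofAdd_zero, map_one, one_mul,
      mul_one]

/-- In `BS(N,N)` with `N ≥ 2`, the subgroup generated by `x = ab` and `y = ab⁻¹` is
free of rank 2: the homomorphism from the free group of rank 2 sending the two
generators to `x` and `y` is injective. -/
theorem bsNN_free_subgroup (N : ℕ) (hN : 2 ≤ N) :
    Function.Injective (FreeGroup.lift (fun i : Fin 2 =>
      if i = 0 then bsA N N * bsB N N else bsA N N * (bsB N N)⁻¹) :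
        FreeGroup (Fin 2) →* BS N N) := by
  have : Fact (1 < N) := ⟨hN⟩
  have ha : (.ofAdd 1 : ZModIntFactor N true) ≠ 1 := by simp
  have hb : (1 : ZModIntFactor N false) < .ofAdd 1 := Multiplicative.ofAdd_lt.2 one_pos
  refine Function.Injective.of_comp (f := BS.toZModCoprodInt N) ?_
  convert Monoid.CoprodI.injective_freeGroup_lift_of_mul_of Bool.false_ne_true.symm ha hb
    using 1
  rw [← MonoidHom.coe_comp]
  congr 1
  ext k
  fin_cases k <;> simp [BS.toZModCoprodInt]
end

section
/- The generating function ∑_{n≥0} (C(2n,n))^2 z^{2n} is not algebraic over C(z). -/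
/-- The generating function `∑_{n≥0} C(2n,n)² z^{2n}` as a power series over `ℂ`. -/
noncomputable def centralBinomSqSeries : PowerSeries ℂ :=
  PowerSeries.mk fun m => if m % 2 = 0 then ((Nat.choose m (m / 2) : ℂ)) ^ 2 else 0

/-!
For real `x` the series is `∑ C(2n,n)² x^{2n}`. Since `16^n / (4n) ≤ C(2n,n)² ≤ 16^n / n`,
comparison with `-log (1 - w) = ∑ w^n / n` shows that along `x = 1/4 - t`, `t → 0⁺`, its sum
tends to infinity but stays below `1 - log t`.

On the other hand, if `p(x, y) = 0` with `p ≠ 0`, `x → a` and `y → ∞`, then `|y|⁻ˢ = O(|x - a|)`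
for some `s`: after substituting `y ↦ 1/y` and swapping the variables, factor out the largest
power `(x - a)^m` of the polynomial; the cofactor `R` has `R(a, ·) ≠ 0`, so `R(a, 1/y)`, which is
`O(x - a)` on the curve, dominates a power of `1/y`. A function of logarithmic growth violates
this bound.
-/

open Filter Topology Asymptotics Polynomial

namespace Polynomial

variable {𝕜 : Type*} [NormedField 𝕜]

theorem isBigO_sub_pow_rootMultiplicity_eval {P : 𝕜[X]} (hP : P ≠ 0) (a : 𝕜) :
    (fun z => (z - a) ^ P.rootMultiplicity a) =O[𝓝 a] fun z => P.eval z := by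
  obtain ⟨Q, hPQ, hQ⟩ := P.exists_eq_pow_rootMultiplicity_mul_and_not_dvd hP a
  have hQa : Q.eval a ≠ 0 := by rwa [dvd_iff_isRoot] at hQ
  have hQ_inv : (fun z => (Q.eval z)⁻¹) =O[𝓝 a] fun _ => (1 : 𝕜) :=
    (Q.continuousAt.inv₀ hQa).tendsto.isBigO_one 𝕜
  refine ((isBigO_refl (fun z => P.eval z) _).mul hQ_inv).congr' ?_ (by simp)
  filter_upwards [Q.continuousAt.eventually_ne hQa] with z hz
  rw [congrArg (eval z) hPQ, eval_mul, eval_pow, eval_sub, eval_X, eval_C,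
    mul_inv_cancel_right₀ hz]

theorem continuous_evalEval (p : 𝕜[X][X]) :
    Continuous fun xy : 𝕜 × 𝕜 => p.evalEval xy.1 xy.2 := by
  induction p using Polynomial.induction_on with
  | C q => simp only [evalEval_C]; exact q.continuous.comp continuous_fst
  | add p q hp hq => simp only [evalEval_add]; exact hp.add hq
  | monomial n q _ =>
    simp only [evalEval_mul, evalEval_C, evalEval_pow, evalEval_X]
    exact (q.continuous.comp continuous_fst).mul (continuous_snd.pow _)

theorem evalEval_swap (x y : 𝕜) (p : 𝕜[X][X]) :
    (Bivariate.swap p).evalEval x y = p.evalEval y x := by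
  rw [← coe_aevalAeval_eq_evalEval, ← coe_aevalAeval_eq_evalEval]
  exact Bivariate.aevalAeval_swap x y p

theorem evalEval_eq_eval_C_add_mul_divByMonic (R : 𝕜[X][X]) (a u v : 𝕜) :
    R.evalEval u v =
      (R.eval (C a)).eval u + (v - a) * (R /ₘ (X - C (C a))).evalEval u v := by
  conv_lhs => rw [← modByMonic_add_div R (X - C (C a)), modByMonic_X_sub_C_eq_C_eval]
  simp only [evalEval_add, evalEval_C, evalEval_mul, evalEval_sub, evalEval_X, eval_C]

variable {ι : Type*} {l : Filter ι}

theorem exists_pow_sub_isBigO_of_evalEval_eq_zero {p : 𝕜[X][X]} (hp : p ≠ 0)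
    {x y : ι → 𝕜} {a b : 𝕜} (hx : Tendsto x l (𝓝[≠] a)) (hy : Tendsto y l (𝓝 b))
    (h : ∀ᶠ i in l, p.evalEval (x i) (y i) = 0) :
    ∃ s : ℕ, (fun i => (y i - b) ^ s) =O[l] fun i => x i - a := by
  obtain ⟨R, hpR, hR⟩ := (Bivariate.swap p).exists_eq_pow_rootMultiplicity_mul_and_not_dvd
    (by simpa using hp) (C a)
  set R₀ := R.eval (C a)
  have hR₀ : R₀ ≠ 0 := by rwa [dvd_iff_isRoot] at hR
  have hR_zero : ∀ᶠ i in l, R.evalEval (y i) (x i) = 0 := by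
    filter_upwards [h, hx self_mem_nhdsWithin] with i hi hxi
    have := congrArg (evalEval (y i) (x i)) hpR
    rw [evalEval_swap, hi, evalEval_mul, evalEval_pow, evalEval_sub, evalEval_X, evalEval_C,
      eval_C] at this
    exact (mul_eq_zero.mp this.symm).resolve_left (pow_ne_zero _ (sub_ne_zero.mpr hxi))
  have hR₁_bdd : (fun i => (R /ₘ (X - C (C a))).evalEval (y i) (x i)) =O[l] fun _ => (1 : 𝕜) :=
    (((continuous_evalEval _).tendsto (b, a)).comp
      (hy.prodMk_nhds (hx.mono_right nhdsWithin_le_nhds))).isBigO_one 𝕜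
  have hR₀_small : (fun i => R₀.eval (y i)) =O[l] fun i => x i - a := by
    refine ((isBigO_refl (fun i => x i - a) l).mul hR₁_bdd).neg_left.congr' ?_ (by simp)
    filter_upwards [hR_zero] with i hi
    rw [evalEval_eq_eval_C_add_mul_divByMonic R a] at hi
    linear_combination -hi
  exact ⟨_, ((isBigO_sub_pow_rootMultiplicity_eval hR₀ b).comp_tendsto hy).trans hR₀_small⟩

theorem exists_inv_pow_isBigO_of_evalEval_eq_zero {p : 𝕜[X][X]} (hp : p ≠ 0)
    {x y : ι → 𝕜} {a : 𝕜} (hx : Tendsto x l (𝓝[≠] a)) (hy : Tendsto y l (Bornology.cobounded 𝕜))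
    (h : ∀ᶠ i in l, p.evalEval (x i) (y i) = 0) :
    ∃ s : ℕ, (fun i => (y i)⁻¹ ^ s) =O[l] fun i => x i - a := by
  have hrev : ∀ᶠ i in l, p.reverse.evalEval (x i) (y i)⁻¹ = 0 := by
    filter_upwards [h, hy.eventually_ne_cobounded 0] with i hi hyi
    let _ := invertibleOfNonzero hyi
    rw [← eval₂_evalRingHom, ← invOf_eq_inv, eval₂_reverse_eq_zero_iff, eval₂_evalRingHom, hi]
  simpa using exists_pow_sub_isBigO_of_evalEval_eq_zero (mt reverse_eq_zero.mp hp) hx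
    (tendsto_inv₀_cobounded.comp hy) hrev

end Polynomial

namespace PowerSeries

open Finset

theorem sum_antidiagonal_coeff_mul_pow {R : Type*} [CommSemiring R] (φ ψ : R⟦X⟧) (x : R)
    (n : ℕ) : ∑ kl ∈ antidiagonal n, coeff kl.1 φ * x ^ kl.1 * (coeff kl.2 ψ * x ^ kl.2) =
      coeff n (φ * ψ) * x ^ n := by
  rw [coeff_mul, sum_mul]
  refine sum_congr rfl fun kl hkl => ?_
  rw [← mem_antidiagonal.mp hkl, pow_add]
  ring

variable {R : Type*} [NormedCommRing R]

noncomputable def evalSum (φ : R⟦X⟧) (x : R) : R := ∑' n, coeff n φ * x ^ n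

def AbsSummableAt (φ : R⟦X⟧) (x : R) : Prop := Summable fun n => ‖coeff n φ * x ^ n‖

theorem AbsSummableAt.mul {φ ψ : R⟦X⟧} {x : R} (hφ : AbsSummableAt φ x)
    (hψ : AbsSummableAt ψ x) : AbsSummableAt (φ * ψ) x := by
  simpa only [AbsSummableAt, sum_antidiagonal_coeff_mul_pow] using
    summable_norm_sum_mul_antidiagonal_of_summable_norm hφ hψ

theorem coeff_coe_mul_pow_eq_zero {q : R[X]} {n : ℕ} (hn : n ∉ range (q.natDegree + 1))
    (x : R) : coeff n (q : R⟦X⟧) * x ^ n = 0 := by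
  rw [Polynomial.coeff_coe, coeff_eq_zero_of_natDegree_lt (by simpa using hn), zero_mul]

theorem absSummableAt_coe (q : R[X]) (x : R) : AbsSummableAt (q : R⟦X⟧) x :=
  summable_of_ne_finset_zero fun _ hn => by rw [coeff_coe_mul_pow_eq_zero hn, norm_zero]

theorem evalSum_coe (q : R[X]) (x : R) : evalSum (q : R⟦X⟧) x = q.eval x := by
  rw [evalSum, tsum_eq_sum fun _ hn => coeff_coe_mul_pow_eq_zero hn x, eval_eq_sum_range]
  simp only [Polynomial.coeff_coe]

theorem AbsSummableAt.pow {φ : R⟦X⟧} {x : R} (hφ : AbsSummableAt φ x) (k : ℕ) :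
    AbsSummableAt (φ ^ k) x := by
  induction k with
  | zero => simpa using absSummableAt_coe 1 x
  | succ k ih => rw [pow_succ]; exact ih.mul hφ

variable [CompleteSpace R]

theorem evalSum_mul {φ ψ : R⟦X⟧} {x : R} (hφ : AbsSummableAt φ x) (hψ : AbsSummableAt ψ x) :
    evalSum (φ * ψ) x = evalSum φ x * evalSum ψ x := by
  simp only [evalSum, tsum_mul_tsum_eq_tsum_sum_antidiagonal_of_summable_norm hφ hψ,
    sum_antidiagonal_coeff_mul_pow]

theorem evalSum_pow {φ : R⟦X⟧} {x : R} (hφ : AbsSummableAt φ x) (k : ℕ) :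
    evalSum (φ ^ k) x = evalSum φ x ^ k := by
  induction k with
  | zero => simpa using evalSum_coe 1 x
  | succ k ih => rw [pow_succ, evalSum_mul (hφ.pow k) hφ, ih, pow_succ]

theorem evalSum_eval₂ {φ : R⟦X⟧} {x : R} (hφ : AbsSummableAt φ x) (p : R[X][X]) :
    evalSum (p.eval₂ coeToPowerSeries.ringHom φ) x = p.evalEval x (evalSum φ x) := by
  have hterm (i : ℕ) : AbsSummableAt ((p.coeff i : R⟦X⟧) * φ ^ i) x :=
    (absSummableAt_coe _ x).mul (hφ.pow i)
  rw [← eval₂_evalRingHom, eval₂_eq_sum_range, eval₂_eq_sum_range, evalSum]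
  simp only [coeToPowerSeries.ringHom_apply, map_sum, sum_mul]
  rw [Summable.tsum_finsetSum fun i _ => (hterm i).of_norm]
  refine sum_congr rfl fun i _ => ?_
  rw [← evalSum, evalSum_mul (absSummableAt_coe _ x) (hφ.pow i), evalSum_coe, evalSum_pow hφ,
    coe_evalRingHom]

end PowerSeries

theorem Nat.succ_mul_centralBinom_sq_le_sixteen_pow (n : ℕ) :
    (n + 1) * centralBinom n ^ 2 ≤ 16 ^ n := by
  induction n with
  | zero => simp
  | succ n ih =>
    have hrec := succ_mul_centralBinom_succ n
    refine Nat.le_of_mul_le_mul_left ?_ (by positivity : 0 < (n + 1) ^ 3)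
    calc (n + 1) ^ 3 * ((n + 1 + 1) * centralBinom (n + 1) ^ 2)
        = (n + 2) * (n + 1) * ((n + 1) * centralBinom (n + 1)) ^ 2 := by ring
      _ = 4 * (n + 2) * (2 * n + 1) ^ 2 * ((n + 1) * centralBinom n ^ 2) := by rw [hrec]; ring
      _ ≤ 16 * (n + 1) ^ 3 * 16 ^ n := Nat.mul_le_mul (by nlinarith) ih
      _ = (n + 1) ^ 3 * 16 ^ (n + 1) := by ring

theorem Nat.sixteen_pow_le_four_mul_mul_centralBinom_sq {n : ℕ} (hn : n ≠ 0) :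
    16 ^ n ≤ 4 * n * centralBinom n ^ 2 := by
  induction n, Nat.one_le_iff_ne_zero.mpr hn using Nat.le_induction with
  | base => decide
  | succ n hn ih =>
    have hrec := succ_mul_centralBinom_succ n
    refine Nat.le_of_mul_le_mul_left ?_ (by positivity : 0 < (n + 1) ^ 2)
    calc (n + 1) ^ 2 * 16 ^ (n + 1) = 16 * (n + 1) ^ 2 * 16 ^ n := by ring
      _ ≤ 16 * (n + 1) ^ 2 * (4 * n * centralBinom n ^ 2) :=
        Nat.mul_le_mul_left _ (ih (by omega))
      _ = 16 * (n + 1) * (4 * n * (n + 1)) * centralBinom n ^ 2 := by ring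
      _ ≤ 16 * (n + 1) * (2 * n + 1) ^ 2 * centralBinom n ^ 2 := by gcongr; nlinarith
      _ = 4 * (n + 1) * ((n + 1) * centralBinom (n + 1)) ^ 2 := by rw [hrec]; ring
      _ = (n + 1) ^ 2 * (4 * (n + 1) * centralBinom (n + 1) ^ 2) := by ring

open Real

theorem centralBinom_sq_div_sixteen_pow_le_inv {n : ℕ} (hn : n ≠ 0) :
    (n.centralBinom : ℝ) ^ 2 / 16 ^ n ≤ (n : ℝ)⁻¹ := by
  have h : ((n * n.centralBinom ^ 2 : ℕ) : ℝ) ≤ (16 ^ n : ℕ) := by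
    exact_mod_cast (Nat.mul_le_mul_right _ n.le_succ).trans
      (Nat.succ_mul_centralBinom_sq_le_sixteen_pow n)
  push_cast at h
  rw [div_le_iff₀ (by positivity), inv_mul_eq_div, le_div_iff₀ (by positivity)]
  linarith

theorem inv_four_mul_le_centralBinom_sq_div_sixteen_pow {n : ℕ} (hn : n ≠ 0) :
    (4 * n : ℝ)⁻¹ ≤ (n.centralBinom : ℝ) ^ 2 / 16 ^ n := by
  have h : ((16 ^ n : ℕ) : ℝ) ≤ (4 * n * n.centralBinom ^ 2 : ℕ) := by
    exact_mod_cast Nat.sixteen_pow_le_four_mul_mul_centralBinom_sq hn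
  push_cast at h
  rw [le_div_iff₀ (by positivity), inv_mul_eq_div, div_le_iff₀ (by positivity)]
  linarith

noncomputable def centralBinomSqSum (w : ℝ) : ℝ :=
  ∑' n, (n.centralBinom : ℝ) ^ 2 / 16 ^ n * w ^ n

theorem summable_centralBinom_sq_div_sixteen_pow_mul_pow {w : ℝ} (hw₀ : 0 ≤ w) (hw₁ : w < 1) :
    Summable fun n => (n.centralBinom : ℝ) ^ 2 / 16 ^ n * w ^ n := by
  refine (summable_geometric_of_lt_one hw₀ hw₁).of_nonneg_of_le (fun n => by positivity)
    fun n => mul_le_of_le_one_left (by positivity) ?_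
  have h : n.centralBinom ^ 2 ≤ 16 ^ n :=
    calc n.centralBinom ^ 2 ≤ (4 ^ n) ^ 2 := Nat.pow_le_pow_left n.centralBinom_le_four_pow 2
      _ = 16 ^ n := by rw [← pow_mul, mul_comm, pow_mul]; norm_num
  rw [div_le_one (by positivity)]
  exact_mod_cast h

theorem centralBinomSqSum_sub_one_mem_Icc {w : ℝ} (hw₀ : 0 ≤ w) (hw₁ : w < 1) :
    centralBinomSqSum w - 1 ∈ Set.Icc (-log (1 - w) / 4) (-log (1 - w)) := by
  have hsum := summable_centralBinom_sq_div_sixteen_pow_mul_pow hw₀ hw₁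
  have hlog := hasSum_pow_div_log_of_abs_lt_one (abs_lt.mpr ⟨by linarith, hw₁⟩)
  have htail := ((summable_nat_add_iff 1).mpr hsum).hasSum
  rw [centralBinomSqSum, hsum.tsum_eq_zero_add]
  simp only [Nat.centralBinom_zero, Nat.cast_one, one_pow, pow_zero, div_one, mul_one,
    add_sub_cancel_left]
  refine ⟨hasSum_le (fun n => ?_) (hlog.div_const 4) htail, hasSum_le (fun n => ?_) htail hlog⟩
  · calc w ^ (n + 1) / (n + 1) / 4 = (4 * (n + 1 : ℕ) : ℝ)⁻¹ * w ^ (n + 1) := by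
          push_cast; field_simp
      _ ≤ _ := by gcongr; exact inv_four_mul_le_centralBinom_sq_div_sixteen_pow n.succ_ne_zero
  · calc _ ≤ ((n + 1 : ℕ) : ℝ)⁻¹ * w ^ (n + 1) := by
          gcongr; exact centralBinom_sq_div_sixteen_pow_le_inv n.succ_ne_zero
      _ = w ^ (n + 1) / (n + 1) := by push_cast; ring

theorem tendsto_centralBinomSqSum_nhdsLT_one : Tendsto centralBinomSqSum (𝓝[<] 1) atTop := by
  have h_sub : Tendsto (fun w : ℝ => 1 - w) (𝓝[<] 1) (𝓝[>] 0) :=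
    tendsto_nhdsWithin_iff.mpr ⟨((continuous_const.sub continuous_id).tendsto' 1 0
      (sub_self 1)).mono_left nhdsWithin_le_nhds,
      eventually_mem_nhdsWithin.mono fun w (hw : w < 1) => sub_pos.mpr hw⟩
  refine tendsto_atTop_mono' _ ?_
    ((tendsto_neg_atBot_atTop.comp (tendsto_log_nhdsGT_zero.comp h_sub)).atTop_div_const
      (by norm_num : (0 : ℝ) < 4))
  filter_upwards [Ioo_mem_nhdsLT (show (0 : ℝ) < 1 by norm_num)] with w hw
  have h := (centralBinomSqSum_sub_one_mem_Icc hw.1.le hw.2).1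
  simp only [Function.comp_apply]
  linarith

theorem tendsto_sixteen_mul_one_div_four_sub_sq :
    Tendsto (fun t : ℝ => 16 * (1 / 4 - t) ^ 2) (𝓝[>] 0) (𝓝[<] 1) := by
  refine tendsto_nhdsWithin_iff.mpr ⟨((continuous_const.mul
    ((continuous_const.sub continuous_id).pow 2)).tendsto' 0 1 (by norm_num)).mono_left
      nhdsWithin_le_nhds, ?_⟩
  filter_upwards [Ioo_mem_nhdsGT (show (0 : ℝ) < 1 / 2 by norm_num)] with t ht
  simp only [Set.mem_Iio]
  nlinarith [ht.1, ht.2]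

theorem centralBinomSqSum_sixteen_mul_one_div_four_sub_sq_le {t : ℝ} (ht₀ : 0 < t)
    (ht : t < 1 / 4) : centralBinomSqSum (16 * (1 / 4 - t) ^ 2) ≤ 1 - log t := by
  have h := (centralBinomSqSum_sub_one_mem_Icc (w := 16 * (1 / 4 - t) ^ 2) (by positivity)
    (by nlinarith)).2
  have h_log : log t ≤ log (1 - 16 * (1 / 4 - t) ^ 2) := log_le_log ht₀ (by nlinarith)
  linarith

theorem not_isBigO_inv_pow_id_of_norm_le_one_sub_log {𝕜 : Type*} [NormedField 𝕜] {F : ℝ → 𝕜}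
    (hF₀ : ∀ᶠ t in 𝓝[>] 0, F t ≠ 0) (hF : ∀ᶠ t in 𝓝[>] 0, ‖F t‖ ≤ 1 - log t) (s : ℕ) :
    ¬ (fun t => (F t)⁻¹ ^ s) =O[𝓝[>] 0] fun t => t := by
  intro h
  have hF_log : F =O[𝓝[>] 0] fun t => |log t| := by
    refine IsBigO.of_bound 2 ?_
    filter_upwards [hF, tendsto_log_nhdsGT_zero.eventually_le_atBot (-1)] with t ht hlog
    rw [norm_abs_eq_norm, norm_eq_abs, abs_of_nonpos (by linarith)]
    linarith
  have hF_pow : (fun t => F t ^ s) =o[𝓝[>] 0] fun t => t⁻¹ := by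
    refine (hF_log.pow s).trans_isLittleO ((isLittleO_abs_log_rpow_rpow_nhdsGT_zero (s : ℝ)
      neg_one_lt_zero).congr' (.of_forall fun t => rpow_natCast _ s) ?_)
    filter_upwards [self_mem_nhdsWithin] with t ht using rpow_neg_one t
  have h_one : (fun _ : ℝ => (1 : 𝕜)) =o[𝓝[>] (0 : ℝ)] fun _ : ℝ => (1 : ℝ) := by
    refine (h.mul_isLittleO hF_pow).congr' ?_ ?_
    · filter_upwards [hF₀] with t ht using by rw [← mul_pow, inv_mul_cancel₀ ht, one_pow]
    · filter_upwards [self_mem_nhdsWithin] with t ht using mul_inv_cancel₀ (ne_of_gt ht)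
  exact one_ne_zero (tendsto_nhds_unique tendsto_const_nhds ((isLittleO_one_iff ℝ).mp h_one))

namespace PowerSeries

theorem coeff_centralBinomSqSeries_two_mul_mul_pow (z : ℂ) (n : ℕ) :
    coeff (2 * n) centralBinomSqSeries * z ^ (2 * n) =
      (n.centralBinom : ℂ) ^ 2 / 16 ^ n * (16 * z ^ 2) ^ n := by
  rw [centralBinomSqSeries, coeff_mk, if_pos (by omega), Nat.mul_div_cancel_left n two_pos,
    ← Nat.centralBinom_eq_two_mul_choose, mul_pow, pow_mul]
  field_simp

theorem coeff_centralBinomSqSeries_two_mul_add_one (n : ℕ) :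
    coeff (2 * n + 1) centralBinomSqSeries = 0 := by
  rw [centralBinomSqSeries, coeff_mk, if_neg (by omega)]

theorem absSummableAt_centralBinomSqSeries {z : ℂ} (hz : ‖z‖ < 1 / 4) :
    AbsSummableAt centralBinomSqSeries z := by
  have hw : 16 * ‖z‖ ^ 2 < 1 := by nlinarith [norm_nonneg z]
  have h_even : HasSum (fun n => ‖coeff (2 * n) centralBinomSqSeries * z ^ (2 * n)‖)
      (centralBinomSqSum (16 * ‖z‖ ^ 2)) := by
    simp only [coeff_centralBinomSqSeries_two_mul_mul_pow, norm_mul, norm_div, norm_pow,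
      Complex.norm_natCast, Complex.norm_ofNat]
    exact (summable_centralBinom_sq_div_sixteen_pow_mul_pow (by positivity) hw).hasSum
  have h_odd : HasSum (fun n => ‖coeff (2 * n + 1) centralBinomSqSeries * z ^ (2 * n + 1)‖) 0 := by
    simp [coeff_centralBinomSqSeries_two_mul_add_one]
  exact (HasSum.even_add_odd (f := fun m => ‖coeff m centralBinomSqSeries * z ^ m‖)
    h_even h_odd).summable

theorem evalSum_centralBinomSqSeries_ofReal {z : ℝ} (hz : |z| < 1 / 4) :
    evalSum centralBinomSqSeries z = centralBinomSqSum (16 * z ^ 2) := by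
  have hw : 16 * z ^ 2 < 1 := by nlinarith [sq_abs z, abs_nonneg z]
  have h_even : HasSum (fun n => coeff (2 * n) centralBinomSqSeries * (z : ℂ) ^ (2 * n))
      (centralBinomSqSum (16 * z ^ 2) : ℂ) := by
    convert Complex.hasSum_ofReal.mpr
      (summable_centralBinom_sq_div_sixteen_pow_mul_pow (by positivity) hw).hasSum using 1
    · ext n
      rw [coeff_centralBinomSqSeries_two_mul_mul_pow]
      push_cast
      ring
    · rfl
  have h_odd : HasSum (fun n => coeff (2 * n + 1) centralBinomSqSeries * (z : ℂ) ^ (2 * n + 1))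
      0 := by
    simp [coeff_centralBinomSqSeries_two_mul_add_one]
  exact (HasSum.even_add_odd (f := fun m => coeff m centralBinomSqSeries * (z : ℂ) ^ m)
    h_even h_odd).tsum_eq.trans (add_zero _)

end PowerSeries

open PowerSeries in
/-- `∑_{n≥0} C(2n,n)² z^{2n}` is not algebraic over `ℂ(z)`: it satisfies no nonzero
polynomial equation with coefficients in `ℂ[z]` (equivalently `ℂ(z)`). -/
theorem centralBinomSq_not_algebraic :
    ¬ ∃ p : Polynomial (Polynomial ℂ), p ≠ 0 ∧
        Polynomial.eval₂ Polynomial.coeToPowerSeries.ringHom centralBinomSqSeries p = 0 := by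
  rintro ⟨p, hp, hpG⟩
  set F : ℝ → ℝ := fun t => centralBinomSqSum (16 * (1 / 4 - t) ^ 2)
  have h_small : ∀ᶠ t in 𝓝[>] (0 : ℝ), t ∈ Set.Ioo 0 (1 / 4) := Ioo_mem_nhdsGT (by norm_num)
  have hF : Tendsto F (𝓝[>] 0) atTop :=
    tendsto_centralBinomSqSum_nhdsLT_one.comp tendsto_sixteen_mul_one_div_four_sub_sq
  have h_rel : ∀ᶠ t in 𝓝[>] 0, p.evalEval ((1 / 4 - t : ℝ) : ℂ) (F t : ℂ) = 0 := by
    filter_upwards [h_small] with t ht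
    have hz : |1 / 4 - t| < 1 / 4 := by rw [abs_lt]; constructor <;> linarith [ht.1, ht.2]
    rw [← evalSum_centralBinomSqSeries_ofReal hz, ← evalSum_eval₂
      (absSummableAt_centralBinomSqSeries (by rwa [Complex.norm_real, norm_eq_abs])), hpG]
    simp [evalSum]
  have hx : Tendsto (fun t : ℝ => ((1 / 4 - t : ℝ) : ℂ)) (𝓝[>] 0) (𝓝[≠] (1 / 4 : ℂ)) := by
    refine tendsto_nhdsWithin_iff.mpr ⟨((Complex.continuous_ofReal.comp
      (continuous_const.sub continuous_id)).tendsto' 0 _ (by simp)).mono_left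
        nhdsWithin_le_nhds, ?_⟩
    filter_upwards [self_mem_nhdsWithin] with t (ht : 0 < t)
    simp [ht.ne']
  have hy : Tendsto (fun t => (F t : ℂ)) (𝓝[>] 0) (Bornology.cobounded ℂ) :=
    tendsto_norm_atTop_iff_cobounded.mp ((tendsto_abs_atTop_atTop.comp hF).congr fun t => by simp)
  obtain ⟨s, hs⟩ := exists_inv_pow_isBigO_of_evalEval_eq_zero hp hx hy h_rel
  refine not_isBigO_inv_pow_id_of_norm_le_one_sub_log (hy.eventually_ne_cobounded 0) ?_ s
    (hs.trans (isBigO_of_le _ fun t => ?_))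
  · filter_upwards [h_small, hF.eventually_ge_atTop 0] with t ht hFt
    rw [Complex.norm_real, norm_eq_abs, abs_of_nonneg hFt]
    exact centralBinomSqSum_sixteen_mul_one_div_four_sub_sq_le ht.1 ht.2
  · simp
end

section
/- In BS(N,N), every word w over {a^{±1},b^{±1}} representing an element of ⟨a⟩ lies in the set L (no prefix of w equals b^{-1} a^j in the group for any j) if and only if w has no factorization w = x b^{-1} y (as strings) with x representing an element of ⟨a^N⟩. -/
/-!
Britton's lemma for `BS(N,N)` is replaced by an explicit faithful model: `BS(N,N)` embeds in
`F(ℤ/N) ⋊ ℤ`, where `a` generates `ℤ`, which acts on the free group by translating its basis, and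
`b` is the basis element `x₀`. A left inverse is `x_c ↦ aᶜ b a⁻ᶜ`, `1 ↦ a`, well defined because
`aᴺ` commutes with `b`. The image of a word is the free word of its letters `b^{±1}`, each tagged
by the exponent of `a` preceding it, modulo `N`.

If a prefix `u` of `w` equals `b⁻¹ aʲ`, the free word of `u` reduces to `x₀⁻¹`, so it contains a
letter `x₀⁻¹` whose prefix reduces to `1`. That letter is an occurrence of `b⁻¹` in `u` preceded by
a word `x` with trivial free part and `a`-exponent divisible by `N`, i.e. `x = a^{Nm}`.
Conversely, `a^{Nm} b⁻¹ = b⁻¹ a^{Nm}`.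
-/

namespace FreeGroup

variable {α : Type*} {L : List (α × Bool)}

theorem Red.exists_eq_append_cons_of_singleton {x : α × Bool} (h : Red L [x]) :
    ∃ X Y, L = X ++ x :: Y ∧ Red X [] ∧ Red Y [] := by
  induction h using Relation.ReflTransGen.head_induction_on with
  | refl => exact ⟨[], [], rfl, .refl, .refl⟩
  | head step _ ih =>
    obtain ⟨X, Y, hXY, hX, hY⟩ := ih
    obtain @⟨L₁, L₂, p, b⟩ := step
    rcases List.append_eq_append_iff.1 hXY with ⟨A, rfl, rfl⟩ | ⟨B, rfl, hB⟩
    · exact ⟨L₁ ++ (p, b) :: (p, !b) :: A, Y, by simp, .head .not hX, hY⟩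
    · rcases List.cons_eq_append_iff.1 hB with ⟨rfl, rfl⟩ | ⟨B, rfl, rfl⟩
      · refine ⟨X ++ [(p, b), (p, !b)], Y, by simp, .head ?_ hX, hY⟩
        simpa using Red.Step.not (L₁ := X) (L₂ := []) (x := p) (b := b)
      · exact ⟨X, B ++ (p, b) :: (p, !b) :: L₂, by simp, hX, .head .not hY⟩

theorem exists_eq_append_cons_of_mk_eq_inv_of {c : α} (h : mk L = (of c)⁻¹) :
    ∃ X Y, L = X ++ (c, false) :: Y ∧ mk X = 1 := by
  obtain ⟨L', hL, hc⟩ := Red.exact.1 (h.trans (inv_mk (L := [(c, true)])))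
  obtain rfl : L' = [(c, false)] := Red.singleton_iff.1 hc
  obtain ⟨X, Y, rfl, hX, -⟩ := hL.exists_eq_append_cons_of_singleton
  exact ⟨X, Y, rfl, Red.exact.2 ⟨[], hX, .refl⟩⟩

end FreeGroup

open SemidirectProduct Multiplicative

namespace BaumslagSolitar

theorem bsA_pow_mul_bsB (N M : ℕ) : bsA N M ^ N * bsB N M = bsB N M * bsA N M ^ M := by
  have h : bsA N M ^ N * bsB N M * (bsA N M ^ M)⁻¹ * (bsB N M)⁻¹ = 1 :=
    PresentedGroup.one_of_mem rfl
  rwa [mul_inv_eq_one, mul_inv_eq_iff_eq_mul] at h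

theorem evalWord_append (N M : ℕ) (u v : List Letter) :
    evalWord N M (u ++ v) = evalWord N M u * evalWord N M v := by
  simp [evalWord]

def letterExponent (e : Bool) : ℤ := if e then 1 else -1

theorem evalWord_cons_a (N M : ℕ) (e : Bool) (w : List Letter) :
    evalWord N M ((0, e) :: w) = bsA N M ^ letterExponent e * evalWord N M w := by
  cases e <;> simp [evalWord, letterExponent, bsA]

theorem evalWord_cons_b (N M : ℕ) (e : Bool) (w : List Letter) :
    evalWord N M ((1, e) :: w) = bsB N M ^ letterExponent e * evalWord N M w := by
  cases e <;> simp [evalWord, letterExponent, bsB]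

variable (N : ℕ)

theorem commute_bsA_pow_bsB : Commute (bsA N N ^ N) (bsB N N) := bsA_pow_mul_bsB N N

def shift : Multiplicative ℤ →* MulAut (FreeGroup (ZMod N)) where
  toFun k := FreeGroup.freeGroupCongr (Equiv.addRight (k.toAdd : ZMod N))
  map_one' := MulEquiv.ext fun x => by simp
  map_mul' k l := MulEquiv.ext fun x => by
    simp only [FreeGroup.freeGroupCongr_apply, MulAut.mul_apply, FreeGroup.map.comp, toAdd_mul,
      Int.cast_add]
    congr 2
    funext c
    simp only [Function.comp_apply, Equiv.coe_addRight]
    abel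

theorem shift_apply_of (k : ℤ) (c : ZMod N) :
    shift N (ofAdd k) (FreeGroup.of c) = FreeGroup.of (c + k) := by
  simp [shift]

abbrev Model := FreeGroup (ZMod N) ⋊[shift N] Multiplicative ℤ

theorem inr_mul_inl (k : ℤ) (x : FreeGroup (ZMod N)) :
    (inr (ofAdd k) * inl x : Model N) = inl (shift N (ofAdd k) x) * inr (ofAdd k) := by
  rw [inl_aut, map_inv, inv_mul_cancel_right]

theorem inr_ofAdd_pow (k : ℤ) (n : ℕ) : (inr (ofAdd k) ^ n : Model N) = inr (ofAdd (n * k)) := by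
  rw [← map_pow, ← ofAdd_nsmul, nsmul_eq_mul]

def toModel : BS N N →* Model N :=
  PresentedGroup.toGroup (f := ![inr (ofAdd 1), inl (FreeGroup.of 0)]) <| by
    rintro r rfl
    simp only [_root_.map_mul, _root_.map_inv, _root_.map_pow, FreeGroup.lift_apply_of]
    simp [inr_ofAdd_pow, inr_mul_inl, shift_apply_of]

theorem toModel_bsA : toModel N (bsA N N) = inr (ofAdd 1) := PresentedGroup.toGroup.of _

theorem toModel_bsA_zpow (m : ℤ) : toModel N (bsA N N ^ m) = inr (ofAdd m) := by
  rw [map_zpow, toModel_bsA, ← map_zpow, ← ofAdd_zsmul, smul_eq_mul, mul_one]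

theorem toModel_bsB : toModel N (bsB N N) = inl (FreeGroup.of 0) := PresentedGroup.toGroup.of _

theorem conj_bsA_zpow_bsB_congr {i j : ℤ} (h : (i : ZMod N) = j) :
    MulAut.conj (bsA N N ^ i) (bsB N N) = MulAut.conj (bsA N N ^ j) (bsB N N) := by
  obtain ⟨m, hm⟩ := (ZMod.intCast_eq_intCast_iff_dvd_sub i j N).1 h
  have hj : bsA N N ^ j = bsA N N ^ i * (bsA N N ^ N) ^ m := by
    rw [← zpow_natCast, ← zpow_mul, ← zpow_add, ← hm, add_sub_cancel]
  rw [hj, map_mul, MulAut.mul_apply, MulAut.conj_apply ((bsA N N ^ N) ^ m),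
    ((commute_bsA_pow_bsB N).zpow_left m).eq, mul_inv_cancel_right]

def ofModel : Model N →* BS N N :=
  SemidirectProduct.lift (FreeGroup.lift fun c => MulAut.conj (bsA N N ^ (c.cast : ℤ)) (bsB N N))
    (zpowersHom _ (bsA N N)) fun k => FreeGroup.ext_hom _ _ fun c => by
      simp only [MonoidHom.comp_apply, MulEquiv.coe_toMonoidHom, FreeGroup.lift_apply_of]
      rw [← ofAdd_toAdd k, shift_apply_of, FreeGroup.lift_apply_of, zpowersHom_apply, toAdd_ofAdd,
        ← MulAut.mul_apply, ← map_mul, ← zpow_add]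
      exact conj_bsA_zpow_bsB_congr N (by push_cast [ZMod.intCast_zmod_cast]; ring)

theorem ofModel_toModel (g : BS N N) : ofModel N (toModel N g) = g := by
  suffices (ofModel N).comp (toModel N) = MonoidHom.id _ from DFunLike.congr_fun this g
  refine PresentedGroup.ext fun i => ?_
  fin_cases i
  · show ofModel N (toModel N (bsA N N)) = bsA N N
    simp [toModel_bsA, ofModel]
  · show ofModel N (toModel N (bsB N N)) = bsB N N
    simp [toModel_bsB, ofModel]

theorem toModel_injective : Function.Injective (toModel N) :=
  Function.LeftInverse.injective (ofModel_toModel N)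

/-- The letters `b^{±1}` of a word, each tagged by the exponent of `a` in front of it, counted
from `k`. -/
def bLetters : ℤ → List Letter → List (ZMod N × Bool)
  | _, [] => []
  | k, (0, e) :: w => bLetters (k + letterExponent e) w
  | k, (1, e) :: w => ((k : ZMod N), e) :: bLetters k w

def aExp : List Letter → ℤ
  | [] => 0
  | (0, e) :: w => letterExponent e + aExp w
  | (1, _) :: w => aExp w

theorem mk_singleton {α : Type*} (c : α) (e : Bool) :
    FreeGroup.mk [(c, e)] = FreeGroup.of c ^ letterExponent e := by
  cases e <;> rfl

theorem inr_mul_toModel_evalWord (k : ℤ) (w : List Letter) :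
    inr (ofAdd k) * toModel N (evalWord N N w)
      = ⟨FreeGroup.mk (bLetters N k w), ofAdd (k + aExp w)⟩ := by
  fun_induction bLetters N k w with
  | case1 k => ext <;> simp [evalWord, aExp, FreeGroup.one_eq_mk]
  | case2 k e w ih =>
    rw [evalWord_cons_a, map_mul, toModel_bsA_zpow, ← mul_assoc, ← map_mul, ← ofAdd_add, ih, aExp,
      add_assoc]
  | case3 k e w ih =>
    rw [evalWord_cons_b, map_mul, map_zpow, toModel_bsB, ← mul_assoc, ← map_zpow, inr_mul_inl,
      mul_assoc, ih, map_zpow, shift_apply_of, zero_add, ← mk_singleton]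
    ext <;> simp [aExp]

theorem exists_eq_append_cons_of_bLetters_eq {k : ℤ} {w : List Letter}
    {X Y : List (ZMod N × Bool)} {c : ZMod N} {e : Bool} (h : bLetters N k w = X ++ (c, e) :: Y) :
    ∃ x y, w = x ++ (1, e) :: y ∧ bLetters N k x = X ∧ ((k + aExp x : ℤ) : ZMod N) = c := by
  fun_induction bLetters N k w generalizing X with
  | case1 k => simp at h
  | case2 k e' w ih =>
    obtain ⟨x, y, rfl, rfl, hc⟩ := ih h
    exact ⟨(0, e') :: x, y, rfl, rfl, by rw [← hc, aExp, add_assoc]⟩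
  | case3 k e' w ih =>
    rcases List.cons_eq_append_iff.1 h with ⟨rfl, hw⟩ | ⟨X, rfl, hw⟩
    · simp only [List.cons.injEq, Prod.mk.injEq] at hw
      obtain ⟨⟨rfl, rfl⟩, -⟩ := hw
      exact ⟨[], w, rfl, rfl, by simp [aExp]⟩
    · obtain ⟨x, y, rfl, rfl, hc⟩ := ih hw
      exact ⟨(1, e') :: x, y, rfl, rfl, hc⟩

theorem toModel_evalWord (w : List Letter) :
    toModel N (evalWord N N w) = ⟨FreeGroup.mk (bLetters N 0 w), ofAdd (aExp w)⟩ := by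
  simpa using inr_mul_toModel_evalWord N 0 w

theorem exists_eq_append_bInv_of_evalWord_eq {u : List Letter} {j : ℤ}
    (h : evalWord N N u = (bsB N N)⁻¹ * bsA N N ^ j) :
    ∃ x y, u = x ++ (1, false) :: y ∧ evalWord N N x ∈ Subgroup.zpowers (bsA N N ^ N) := by
  have hu := toModel_evalWord N u
  rw [h, map_mul, map_inv, toModel_bsB, toModel_bsA_zpow] at hu
  have hleft : FreeGroup.mk (bLetters N 0 u) = (FreeGroup.of 0)⁻¹ := by
    simpa using congrArg SemidirectProduct.left hu.symm
  obtain ⟨X, Y, hXY, hX⟩ := FreeGroup.exists_eq_append_cons_of_mk_eq_inv_of hleft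
  obtain ⟨x, y, rfl, rfl, hx⟩ := exists_eq_append_cons_of_bLetters_eq N hXY
  obtain ⟨m, hm⟩ := (ZMod.intCast_zmod_eq_zero_iff_dvd _ N).1 (by simpa using hx)
  refine ⟨x, y, rfl, Subgroup.mem_zpowers_iff.2 ⟨m, toModel_injective N ?_⟩⟩
  rw [toModel_evalWord, ← zpow_natCast, ← zpow_mul, toModel_bsA_zpow, hX, ← hm]
  rfl

theorem evalWord_append_bInv_of_mem_zpowers {x : List Letter}
    (hx : evalWord N N x ∈ Subgroup.zpowers (bsA N N ^ N)) :
    ∃ j : ℤ, evalWord N N (x ++ [(1, false)]) = (bsB N N)⁻¹ * bsA N N ^ j := by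
  obtain ⟨m, hm⟩ := Subgroup.mem_zpowers_iff.1 hx
  refine ⟨N * m, ?_⟩
  rw [evalWord_append, ← hm, zpow_mul, zpow_natCast]
  simpa [evalWord, bsB] using ((commute_bsA_pow_bsB N).zpow_left m).inv_right.eq

end BaumslagSolitar

theorem mem_L_iff_no_factorization_general (N : ℕ) (w : List Letter) :
    (∀ u : List Letter, u <+: w →
        ∀ j : ℤ, evalWord N N u ≠ (bsB N N)⁻¹ * bsA N N ^ j)
      ↔ ¬ ∃ x y : List Letter, w = x ++ [((1 : Fin 2), false)] ++ y ∧
          evalWord N N x ∈ Subgroup.zpowers (bsA N N ^ N) := by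
  constructor
  · rintro hL ⟨x, y, rfl, hx⟩
    obtain ⟨j, hj⟩ := BaumslagSolitar.evalWord_append_bInv_of_mem_zpowers N hx
    exact hL _ ⟨y, rfl⟩ j hj
  · rintro hno u ⟨v, rfl⟩ j hj
    obtain ⟨x, y, rfl, hx⟩ := BaumslagSolitar.exists_eq_append_bInv_of_evalWord_eq N hj
    exact hno ⟨x, y ++ v, by simp, hx⟩

/-- Lemma characterising `𝓛` in `BS(N,N)`: for a word `w` representing an element of
`⟨a⟩`, no prefix of `w` equals `b⁻¹ aʲ` in the group (for any `j`) if and only if `w`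
admits no factorisation (as strings) `w = x · b⁻¹ · y` with `x` representing an element
of `⟨aᴺ⟩`. -/
theorem mem_L_iff_no_factorization (N : ℕ) (hN : 1 ≤ N) (w : List Letter)
    (hw : evalWord N N w ∈ Subgroup.zpowers (bsA N N)) :
    (∀ u : List Letter, u <+: w →
        ∀ j : ℤ, evalWord N N u ≠ (bsB N N)⁻¹ * bsA N N ^ j)
      ↔ ¬ ∃ x y : List Letter, w = x ++ [((1 : Fin 2), false)] ++ y ∧
          evalWord N N x ∈ Subgroup.zpowers (bsA N N ^ N) :=
  mem_L_iff_no_factorization_general N w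
end
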